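/- Let m ≥ 1 be a natural number. For every finitely supported function u : ℤ → ℂ with u(n) = 0 for all n ≤ 2m (in particular u vanishes at 0,1,...,2m and on all negative integers), one has ∑_{n=1}^{∞} |(D Δ^m u)(n)|² ≥ 2^{2m−2} (2m)! · ∑_{n=1}^{∞} |u(n)|²/n^{4m+2}, where (Du)(n) = u(n) − u(n−1) is the discrete derivative, Δ is the discrete Laplacian (Δu)(n) = 2u(n) − u(n+1) − u(n−1), and Δ^m is its m-fold composition. -/

import Mathlib

/-!
Since `Δ u (n) = -(D² u)(n + 1)`, we have `‖D Δ^m u (n)‖ = ‖D^(2m+1) u (n + m)‖`, and after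
translating `u` by `2m` the claim becomes a chain of weighted discrete Hardy inequalities for
functions supported in the positive integers. Each link sums the pointwise inequality
`(1 - p/q)‖a‖² + (1 - q/p)‖b‖² ≤ ‖a - b‖²` (with `p = g (n - 1)`, `q = g n`) by parts, for a
positive "ground state" `g`. For `g n = √n` and unit weight this gives
`∑ ‖D v‖² ≥ ¼ ∑ ‖v n‖² / (n (n + 1))`; for `g n = n` and the weight `1 / (n)_q` (rising
factorial) it gives `∑ ‖D v‖² / (n)_q ≥ q ∑ ‖v n‖² / (n (n)_(q+1))`. Applying the first to
`D^(2m) v` and the second with `q = 2, 4, …, 4m`, using `n (n)_(q+1) ≤ (n)_(q+2)` between the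
links and `n (n)_(4m+1) ≤ (n + 2m)^(4m+2)` at the end, yields the constant
`¼ · 2 · 4 ⋯ 4m = 2^(2m-2) (2m)!`.
-/

open scoped BigOperators

/-- The discrete Laplacian `(Δu)(n) = 2u(n) - u(n+1) - u(n-1)`. -/
def discreteLaplacian (u : ℤ → ℂ) : ℤ → ℂ :=
  fun n => 2 * u n - u (n + 1) - u (n - 1)

/-- The discrete derivative `(Du)(n) = u(n) - u(n-1)`. -/
def discreteDeriv (u : ℤ → ℂ) : ℤ → ℂ :=
  fun n => u n - u (n - 1)

open Function Polynomial
open scoped Nat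

section DiscreteCalculus

variable (u : ℤ → ℂ)

theorem discreteDeriv_comp_add_const (c : ℤ) :
    discreteDeriv (fun n => u (n + c)) = fun n => discreteDeriv u (n + c) := by
  funext n
  simp only [discreteDeriv, sub_add_eq_add_sub]

theorem iterate_discreteDeriv_comp_add_const (c : ℤ) (j : ℕ) :
    discreteDeriv^[j] (fun n => u (n + c)) = fun n => discreteDeriv^[j] u (n + c) := by
  induction j with
  | zero => rfl
  | succ j ih => rw [iterate_succ_apply', iterate_succ_apply', ih, discreteDeriv_comp_add_const]

theorem discreteDeriv_const_mul (a : ℂ) :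
    discreteDeriv (fun n => a * u n) = fun n => a * discreteDeriv u n := by
  funext n
  simp only [discreteDeriv, mul_sub]

theorem iterate_discreteDeriv_const_mul (a : ℂ) (j : ℕ) :
    discreteDeriv^[j] (fun n => a * u n) = fun n => a * discreteDeriv^[j] u n := by
  induction j with
  | zero => rfl
  | succ j ih => rw [iterate_succ_apply', iterate_succ_apply', ih, discreteDeriv_const_mul]

theorem discreteLaplacian_eq :
    discreteLaplacian u = fun n => -discreteDeriv^[2] u (n + 1) := by
  funext n
  simp only [discreteLaplacian, iterate_succ_apply', iterate_zero_apply, discreteDeriv,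
    add_sub_cancel_right]
  ring

theorem iterate_discreteLaplacian_apply (m : ℕ) (n : ℤ) :
    discreteLaplacian^[m] u n = (-1) ^ m * discreteDeriv^[2 * m] u (n + m) := by
  induction m generalizing n with
  | zero => simp
  | succ m ih =>
    rw [iterate_succ_apply', discreteLaplacian_eq, funext ih, iterate_discreteDeriv_const_mul,
      iterate_discreteDeriv_comp_add_const, ← iterate_add_apply]
    push_cast
    ring_nf

theorem norm_discreteDeriv_iterate_discreteLaplacian (m : ℕ) (n : ℤ) :
    ‖discreteDeriv (discreteLaplacian^[m] u) n‖ = ‖discreteDeriv^[2 * m + 1] u (n + m)‖ := by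
  rw [funext (iterate_discreteLaplacian_apply u m), discreteDeriv_const_mul,
    discreteDeriv_comp_add_const, ← iterate_succ_apply' discreteDeriv]
  simp

theorem discreteDeriv_eq_zero_of_le {c : ℤ} (h : ∀ n ≤ c, u n = 0) :
    ∀ n ≤ c, discreteDeriv u n = 0 := fun n hn => by
  simp [discreteDeriv, h n hn, h (n - 1) (by omega)]

theorem iterate_discreteDeriv_eq_zero_of_le {c : ℤ} (h : ∀ n ≤ c, u n = 0) (j : ℕ) :
    ∀ n ≤ c, discreteDeriv^[j] u n = 0 := by
  induction j with
  | zero => exact h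
  | succ j ih => simpa only [iterate_succ_apply'] using discreteDeriv_eq_zero_of_le _ ih

theorem finite_support_discreteDeriv (hu : (support u).Finite) :
    (support (discreteDeriv u)).Finite := by
  refine (hu.union (hu.image (· + 1))).subset fun n hn => ?_
  by_cases hun : u n = 0
  · refine Or.inr ⟨n - 1, fun hu' => hn ?_, sub_add_cancel n 1⟩
    simp [discreteDeriv, hun, hu']
  · exact Or.inl hun

end DiscreteCalculus

theorem weighted_sq_le_norm_sub_sq {E : Type*} [SeminormedAddCommGroup E] (a b : E) {p q : ℝ}
    (hp : 0 ≤ p) (hq : 0 < q) (hb : p = 0 → b = 0) :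
    (1 - p / q) * ‖a‖ ^ 2 + (1 - q / p) * ‖b‖ ^ 2 ≤ ‖a - b‖ ^ 2 := by
  rcases hp.eq_or_lt with rfl | hp
  · -- `q / 0 = 0`, so the claim reads `‖a‖² + ‖b‖² ≤ ‖a - b‖²` with `b = 0`
    simp [hb rfl]
  have hnorm : (‖a‖ - ‖b‖) ^ 2 ≤ ‖a - b‖ ^ 2 :=
    sq_le_sq.2 (by simpa [abs_norm] using abs_norm_sub_norm_le a b)
  calc (1 - p / q) * ‖a‖ ^ 2 + (1 - q / p) * ‖b‖ ^ 2
      = (‖a‖ - ‖b‖) ^ 2 - (p * ‖a‖ - q * ‖b‖) ^ 2 / (p * q) := by field_simp; ring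
    _ ≤ (‖a‖ - ‖b‖) ^ 2 := sub_le_self _ (by positivity)
    _ ≤ ‖a - b‖ ^ 2 := hnorm

theorem sqrt_hardy_weight_le {x : ℝ} (hx : 1 ≤ x) :
    4⁻¹ * (x * (x + 1))⁻¹ ≤ (1 - √(x - 1) / √x) + (1 - √(x + 1) / √x) := by
  set a := √(x - 1)
  set s := √x
  set b := √(x + 1)
  have ha : a ^ 2 = x - 1 := Real.sq_sqrt (by linarith)
  have hs : s ^ 2 = x := Real.sq_sqrt (by linarith)
  have hb : b ^ 2 = x + 1 := Real.sq_sqrt (by linarith)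
  have has : a ≤ s := Real.sqrt_le_sqrt (by linarith)
  have hsb : s ≤ b := Real.sqrt_le_sqrt (by linarith)
  have hs0 : 0 < s := Real.sqrt_pos.2 (by linarith)
  -- `2s - a - b = 1/(s + a) - 1/(s + b) = (b - a)/((s + a)(s + b))` and `b - a = 2/(a + b)`
  have hdX : (2 * s - a - b) * ((a + b) * (s + a) * (s + b)) = 2 := by
    linear_combination (s + b) * (a + b) * (hs - ha) - (s + a) * (a + b) * (hb - hs) + (hb - ha)
  have hXs : (a + b) * (s + a) * (s + b) * s ≤ 8 * (x * (x + 1)) :=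
    calc (a + b) * (s + a) * (s + b) * s ≤ (b + b) * (s + s) * (b + b) * s := by
          gcongr; linarith
      _ = 8 * (s ^ 2 * b ^ 2) := by ring
      _ = 8 * (x * (x + 1)) := by rw [hs, hb]
  calc 4⁻¹ * (x * (x + 1))⁻¹ = 2 / (8 * (x * (x + 1))) := by field_simp; norm_num
    _ ≤ 2 / ((a + b) * (s + a) * (s + b) * s) := by gcongr
    _ = (1 - a / s) + (1 - b / s) := by
      rw [div_eq_iff (by positivity)]
      field_simp
      linear_combination -hdX

theorem ascPochhammer_eval_succ_left (q : ℕ) (x : ℝ) :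
    (ascPochhammer ℝ (q + 1)).eval x = x * (ascPochhammer ℝ q).eval (x + 1) := by
  simp [ascPochhammer_succ_left]

theorem ascPochhammer_hardy_weight_eq (q : ℕ) {x : ℝ} (hx : 0 < x) :
    ((ascPochhammer ℝ q).eval x)⁻¹ * (1 - (x - 1) / x)
        + ((ascPochhammer ℝ q).eval (x + 1))⁻¹ * (1 - (x + 1) / x)
      = q * (x * (ascPochhammer ℝ (q + 1)).eval x)⁻¹ := by
  have hP := ascPochhammer_pos q x hx
  have hP1 := ascPochhammer_pos q (x + 1) (by linarith)
  have hrec : (ascPochhammer ℝ q).eval x * (x + q) = x * (ascPochhammer ℝ q).eval (x + 1) := by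
    rw [← ascPochhammer_succ_eval, ascPochhammer_eval_succ_left]
  rw [ascPochhammer_succ_eval]
  field_simp
  linear_combination -hrec

theorem mul_ascPochhammer_eval_le_succ (q : ℕ) {x : ℝ} (hx : 0 < x) :
    x * (ascPochhammer ℝ q).eval x ≤ (ascPochhammer ℝ (q + 1)).eval x := by
  rw [ascPochhammer_succ_eval, mul_comm]
  gcongr
  · exact (ascPochhammer_pos q x hx).le
  · exact le_add_of_nonneg_right q.cast_nonneg

theorem ascPochhammer_eval_le_pow (n : ℕ) {x : ℝ} (hx : 0 ≤ x) :
    (ascPochhammer ℝ (2 * n + 1)).eval x ≤ (x + n) ^ (2 * n + 1) := by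
  induction n generalizing x with
  | zero => simp
  | succ n ih =>
    -- pair the outermost factors: `x (x + 2n + 2) ≤ (x + n + 1)^2`
    have hP := ascPochhammer_pos (2 * n + 1) (x + 1) (by linarith)
    calc (ascPochhammer ℝ (2 * (n + 1) + 1)).eval x
        = x * (x + 2 * n + 2) * (ascPochhammer ℝ (2 * n + 1)).eval (x + 1) := by
          rw [show 2 * (n + 1) + 1 = 2 * n + 1 + 1 + 1 by ring, ascPochhammer_eval_succ_left,
            ascPochhammer_succ_eval]
          push_cast
          ring
      _ ≤ (x + n + 1) ^ 2 * (x + 1 + n) ^ (2 * n + 1) := by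
          gcongr
          · nlinarith [sq_nonneg (n + 1 : ℝ)]
          · exact ih (by linarith)
      _ = (x + (n + 1 : ℕ)) ^ (2 * (n + 1) + 1) := by push_cast; ring

theorem mul_ascPochhammer_eval_le_pow (n : ℕ) {x : ℝ} (hx : 0 < x) :
    x * (ascPochhammer ℝ (2 * n + 1)).eval x ≤ (x + n) ^ (2 * n + 2) := by
  rw [pow_succ']
  exact mul_le_mul (le_add_of_nonneg_right n.cast_nonneg) (ascPochhammer_eval_le_pow n hx.le)
    (ascPochhammer_pos _ x hx).le (by positivity)

section Hardy

variable {v : ℤ → ℂ}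

theorem summable_mul_norm_sq (hv : (support v).Finite) (ρ : ℤ → ℝ) :
    Summable fun n => ρ n * ‖v n‖ ^ 2 :=
  summable_of_hasFiniteSupport <| hv.subset <| (support_mul_subset_right _ _).trans
    fun n hn hvn => hn (by simp [hvn])

theorem tsum_mul_norm_sq_le_of_pos (hv : (support v).Finite) (hv0 : ∀ n ≤ 0, v n = 0)
    {ρ σ : ℤ → ℝ} (h : ∀ n, 0 < n → ρ n ≤ σ n) :
    ∑' n, ρ n * ‖v n‖ ^ 2 ≤ ∑' n, σ n * ‖v n‖ ^ 2 := by
  refine (summable_mul_norm_sq hv ρ).tsum_le_tsum (fun n => ?_) (summable_mul_norm_sq hv σ)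
  rcases le_or_gt n 0 with hn | hn
  · simp [hv0 n hn]
  · exact mul_le_mul_of_nonneg_right (h n hn) (sq_nonneg _)

theorem weighted_discrete_hardy_term_le (hv0 : ∀ n ≤ 0, v n = 0) {w g : ℤ → ℝ}
    (hw : ∀ n, 0 < n → 0 ≤ w n) (hg : ∀ n, 0 < n → 0 < g n) (hg0 : 0 ≤ g 0) (n : ℤ) :
    w n * (1 - g (n - 1) / g n) * ‖v n‖ ^ 2 + w n * (1 - g n / g (n - 1)) * ‖v (n - 1)‖ ^ 2
      ≤ w n * ‖discreteDeriv v n‖ ^ 2 := by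
  rcases le_or_gt n 0 with hn | hn
  · simp [discreteDeriv, hv0 n hn, hv0 (n - 1) (by omega)]
  obtain ⟨hg1, hv1⟩ : 0 ≤ g (n - 1) ∧ (g (n - 1) = 0 → v (n - 1) = 0) := by
    rcases le_or_gt (n - 1) 0 with hn' | hn'
    · exact ⟨by rwa [show n - 1 = 0 by omega], fun _ => hv0 _ hn'⟩
    · exact ⟨(hg _ hn').le, fun h => absurd h (hg _ hn').ne'⟩
  rw [mul_assoc, mul_assoc, ← mul_add]
  exact mul_le_mul_of_nonneg_left (weighted_sq_le_norm_sub_sq _ _ hg1 (hg n hn) hv1) (hw n hn)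

theorem weighted_discrete_hardy (hv : (support v).Finite) (hv0 : ∀ n ≤ 0, v n = 0)
    {w g ρ : ℤ → ℝ} (hw : ∀ n, 0 < n → 0 ≤ w n) (hg : ∀ n, 0 < n → 0 < g n) (hg0 : 0 ≤ g 0)
    (hρ : ∀ n, 0 < n →
      ρ n ≤ w n * (1 - g (n - 1) / g n) + w (n + 1) * (1 - g (n + 1) / g n)) :
    ∑' n, ρ n * ‖v n‖ ^ 2 ≤ ∑' n, w n * ‖discreteDeriv v n‖ ^ 2 := by
  set A : ℤ → ℝ := fun n => w n * (1 - g (n - 1) / g n) * ‖v n‖ ^ 2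
  set B : ℤ → ℝ := fun n => w (n + 1) * (1 - g (n + 1) / g n) * ‖v n‖ ^ 2
  have hA : Summable A := summable_mul_norm_sq hv _
  have hB : Summable fun n => B (n - 1) :=
    ((Equiv.subRight (1 : ℤ)).summable_iff (f := B)).2 (summable_mul_norm_sq hv _)
  calc ∑' n, ρ n * ‖v n‖ ^ 2 ≤ ∑' n, (A n + B n) := by
        simp only [A, B, ← add_mul]
        exact tsum_mul_norm_sq_le_of_pos hv hv0 hρ
    _ = ∑' n, (A n + B (n - 1)) := by
        rw [hA.tsum_add (summable_mul_norm_sq hv _), hA.tsum_add hB]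
        exact congrArg (_ + ·) ((Equiv.subRight (1 : ℤ)).tsum_eq B).symm
    _ ≤ ∑' n, w n * ‖discreteDeriv v n‖ ^ 2 :=
        (hA.add hB).tsum_le_tsum (fun n => by
          simpa only [A, B, sub_add_cancel] using weighted_discrete_hardy_term_le hv0 hw hg hg0 n)
          (summable_mul_norm_sq (finite_support_discreteDeriv v hv) w)

theorem discrete_hardy (hv : (support v).Finite) (hv0 : ∀ n ≤ 0, v n = 0) :
    4⁻¹ * ∑' n : ℤ, ((n : ℝ) * (n + 1))⁻¹ * ‖v n‖ ^ 2 ≤ ∑' n, ‖discreteDeriv v n‖ ^ 2 := by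
  rw [← tsum_mul_left]
  simp_rw [← mul_assoc]
  simpa only [one_mul] using weighted_discrete_hardy hv hv0 (w := fun _ => 1) (g := fun n => √n)
    (fun _ _ => zero_le_one) (fun n hn => Real.sqrt_pos.2 (by exact_mod_cast hn))
    (Real.sqrt_nonneg _) (fun n hn => by
      push_cast
      simpa only [one_mul] using sqrt_hardy_weight_le (Int.cast_one_le_of_pos hn))

theorem discrete_hardy_ascPochhammer (q : ℕ) (hv : (support v).Finite)
    (hv0 : ∀ n ≤ 0, v n = 0) :
    q * ∑' n : ℤ, ((n : ℝ) * (ascPochhammer ℝ (q + 1)).eval (n : ℝ))⁻¹ * ‖v n‖ ^ 2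
      ≤ ∑' n : ℤ, ((ascPochhammer ℝ q).eval (n : ℝ))⁻¹ * ‖discreteDeriv v n‖ ^ 2 := by
  rw [← tsum_mul_left]
  simp_rw [← mul_assoc]
  refine weighted_discrete_hardy hv hv0 (g := fun n => n)
    (fun n hn => (inv_pos.2 (ascPochhammer_pos q _ (by exact_mod_cast hn))).le)
    (fun n hn => by exact_mod_cast hn) Int.cast_zero.ge (fun n hn => ?_)
  push_cast
  exact (ascPochhammer_hardy_weight_eq q (by exact_mod_cast hn)).ge

theorem discrete_hardy_iterate (i : ℕ) (hv : (support v).Finite)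
    (hv0 : ∀ n ≤ 0, v n = 0) :
    2 ^ i * i ! / 4 * ∑' n : ℤ, ((ascPochhammer ℝ (2 * i + 2)).eval (n : ℝ))⁻¹ * ‖v n‖ ^ 2
      ≤ ∑' n, ‖discreteDeriv^[i + 1] v n‖ ^ 2 := by
  induction i generalizing v with
  | zero =>
    convert discrete_hardy hv hv0 using 3 <;> norm_num [ascPochhammer_succ_eval]
  | succ i ih =>
    set c : ℝ := 2 ^ i * i ! / 4
    have hc : 0 ≤ c := by positivity
    calc _ ≤ c * ((2 * i + 2 : ℕ) * ∑' n : ℤ,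
            ((n : ℝ) * (ascPochhammer ℝ (2 * i + 2 + 1)).eval (n : ℝ))⁻¹ * ‖v n‖ ^ 2) := by
          rw [show 2 ^ (i + 1) * (i + 1)! / 4 = c * ((2 * i + 2 : ℕ) : ℝ) by
            simp only [c, Nat.factorial_succ]; push_cast; ring, mul_assoc]
          refine mul_le_mul_of_nonneg_left (mul_le_mul_of_nonneg_left
            (tsum_mul_norm_sq_le_of_pos hv hv0 fun n hn => ?_) (Nat.cast_nonneg _)) hc
          have hn' : (0 : ℝ) < n := by exact_mod_cast hn
          gcongr
          · exact mul_pos hn' (ascPochhammer_pos _ _ hn')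
          · exact mul_ascPochhammer_eval_le_succ _ hn'
      _ ≤ c * ∑' n : ℤ, ((ascPochhammer ℝ (2 * i + 2)).eval (n : ℝ))⁻¹
            * ‖discreteDeriv v n‖ ^ 2 :=
          mul_le_mul_of_nonneg_left (discrete_hardy_ascPochhammer _ hv hv0) hc
      _ ≤ ∑' n, ‖discreteDeriv^[i + 1 + 1] v n‖ ^ 2 :=
          ih (finite_support_discreteDeriv v hv) (discreteDeriv_eq_zero_of_le v hv0)

theorem discrete_higher_order_hardy (m : ℕ) (hm : 1 ≤ m) (hv : (support v).Finite)
    (hv0 : ∀ n ≤ 0, v n = 0) :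
    (2 : ℝ) ^ (2 * (m : ℤ) - 2) * (2 * m)!
        * ∑' n : ℤ, (((n : ℝ) + 2 * m) ^ (4 * m + 2))⁻¹ * ‖v n‖ ^ 2
      ≤ ∑' n, ‖discreteDeriv^[2 * m + 1] v n‖ ^ 2 := by
  obtain ⟨k, rfl⟩ : ∃ k, m = k + 1 := ⟨m - 1, by omega⟩
  set c : ℝ := 2 ^ (2 * k + 1) * (2 * k + 1)! / 4
  have hc : 0 ≤ c := by positivity
  have hconst : (2 : ℝ) ^ (2 * ((k + 1 : ℕ) : ℤ) - 2) * (2 * (k + 1))!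
      = c * ((4 * k + 4 : ℕ) : ℝ) := by
    rw [show 2 * ((k + 1 : ℕ) : ℤ) - 2 = ((2 * k : ℕ) : ℤ) by push_cast; ring, zpow_natCast,
      show 2 * (k + 1) = 2 * k + 1 + 1 by ring, Nat.factorial_succ]
    push_cast
    ring
  calc _ ≤ c * ((4 * k + 4 : ℕ) * ∑' n : ℤ,
          ((n : ℝ) * (ascPochhammer ℝ (4 * k + 4 + 1)).eval (n : ℝ))⁻¹ * ‖v n‖ ^ 2) := by
        rw [hconst, mul_assoc]
        refine mul_le_mul_of_nonneg_left (mul_le_mul_of_nonneg_left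
          (tsum_mul_norm_sq_le_of_pos hv hv0 fun n hn => ?_) (Nat.cast_nonneg _)) hc
        have hn' : (0 : ℝ) < n := by exact_mod_cast hn
        refine inv_anti₀ (mul_pos hn' (ascPochhammer_pos _ _ hn')) ?_
        rw [show 4 * k + 4 + 1 = 2 * (2 * k + 2) + 1 by ring,
          show 4 * (k + 1) + 2 = 2 * (2 * k + 2) + 2 by ring]
        refine (mul_ascPochhammer_eval_le_pow (2 * k + 2) hn').trans_eq ?_
        push_cast
        ring
    _ ≤ c * ∑' n : ℤ, ((ascPochhammer ℝ (4 * k + 4)).eval (n : ℝ))⁻¹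
          * ‖discreteDeriv v n‖ ^ 2 :=
        mul_le_mul_of_nonneg_left (discrete_hardy_ascPochhammer _ hv hv0) hc
    _ ≤ ∑' n, ‖discreteDeriv^[2 * (k + 1) + 1] v n‖ ^ 2 := by
        have := discrete_hardy_iterate (2 * k + 1) (finite_support_discreteDeriv v hv)
          (discreteDeriv_eq_zero_of_le v hv0)
        rwa [show 2 * (2 * k + 1) + 2 = 4 * k + 4 by ring] at this

end Hardy

theorem tsum_nat_add_one_eq_tsum_int {α : Type*} [AddCommMonoid α] [TopologicalSpace α]
    {f : ℤ → α} (hf : ∀ n ≤ 0, f n = 0) : ∑' n : ℕ, f (n + 1) = ∑' n : ℤ, f n := by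
  refine Injective.tsum_eq (g := fun n : ℕ => (n : ℤ) + 1) (fun a b h => by simpa using h)
    fun n hn => ⟨(n - 1).toNat, ?_⟩
  have : 0 < n := not_le.1 fun h => hn (hf n h)
  simp only
  omega

theorem tsum_nat_norm_sq_discreteDeriv_iterate_discreteLaplacian (m : ℕ) {u : ℤ → ℂ}
    (h0 : ∀ n ≤ 2 * (m : ℤ), u n = 0) :
    ∑' n : ℕ, ‖discreteDeriv (discreteLaplacian^[m] u) (n + 1)‖ ^ 2
      = ∑' n : ℤ, ‖discreteDeriv^[2 * m + 1] u n‖ ^ 2 :=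
  calc ∑' n : ℕ, ‖discreteDeriv (discreteLaplacian^[m] u) (n + 1)‖ ^ 2
      = ∑' n : ℤ, ‖discreteDeriv^[2 * m + 1] u (n + m)‖ ^ 2 := by
        simp only [norm_discreteDeriv_iterate_discreteLaplacian]
        refine tsum_nat_add_one_eq_tsum_int
          (f := fun n => ‖discreteDeriv^[2 * m + 1] u (n + m)‖ ^ 2) fun n hn => ?_
        simp [iterate_discreteDeriv_eq_zero_of_le u h0 _ (n + m) (by omega)]
    _ = ∑' n : ℤ, ‖discreteDeriv^[2 * m + 1] u n‖ ^ 2 :=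
        (Equiv.addRight (m : ℤ)).tsum_eq fun n => ‖discreteDeriv^[2 * m + 1] u n‖ ^ 2

theorem higher_order_hardy_odd
    (m : ℕ) (hm : 1 ≤ m) (u : ℤ → ℂ)
    (hu : (Function.support u).Finite)
    (h0 : ∀ n : ℤ, n ≤ 2 * (m : ℤ) → u n = 0) :
    ∑' n : ℕ, ‖(discreteDeriv (discreteLaplacian^[m] u)) ((n : ℤ) + 1)‖ ^ 2 ≥
      (2 : ℝ) ^ (2 * (m : ℤ) - 2) * (Nat.factorial (2 * m)) *
        ∑' n : ℕ, ‖u ((n : ℤ) + 1)‖ ^ 2 / ((n : ℝ) + 1) ^ (4 * m + 2) := by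
  set v : ℤ → ℂ := fun n => u (n + 2 * m)
  have hv : (support v).Finite := hu.preimage (add_left_injective _).injOn
  have hv0 : ∀ n ≤ 0, v n = 0 := fun n hn => h0 _ (by omega)
  have hL : ∑' n : ℕ, ‖discreteDeriv (discreteLaplacian^[m] u) (n + 1)‖ ^ 2
      = ∑' n : ℤ, ‖discreteDeriv^[2 * m + 1] v n‖ ^ 2 := by
    rw [tsum_nat_norm_sq_discreteDeriv_iterate_discreteLaplacian m h0]
    simp only [v, iterate_discreteDeriv_comp_add_const]
    exact ((Equiv.addRight (2 * m : ℤ)).tsum_eq _).symm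
  have hR : ∑' n : ℕ, ‖u (n + 1)‖ ^ 2 / ((n : ℝ) + 1) ^ (4 * m + 2)
      = ∑' n : ℤ, (((n : ℝ) + 2 * m) ^ (4 * m + 2))⁻¹ * ‖v n‖ ^ 2 :=
    calc ∑' n : ℕ, ‖u (n + 1)‖ ^ 2 / ((n : ℝ) + 1) ^ (4 * m + 2)
        = ∑' n : ℤ, ‖u n‖ ^ 2 / (n : ℝ) ^ (4 * m + 2) := by
          convert tsum_nat_add_one_eq_tsum_int (f := fun n : ℤ => ‖u n‖ ^ 2 / (n : ℝ) ^ (4 * m + 2))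
            fun n hn => by simp [h0 n (by omega)] using 3
          push_cast; rfl
      _ = ∑' n : ℤ, ‖u (n + 2 * m)‖ ^ 2 / ((n + 2 * m : ℤ) : ℝ) ^ (4 * m + 2) :=
          ((Equiv.addRight (2 * m : ℤ)).tsum_eq fun n => ‖u n‖ ^ 2 / (n : ℝ) ^ (4 * m + 2)).symm
      _ = ∑' n : ℤ, (((n : ℝ) + 2 * m) ^ (4 * m + 2))⁻¹ * ‖v n‖ ^ 2 :=
          tsum_congr fun n => by push_cast; ring
  rw [ge_iff_le, hL, hR]
  exact discrete_higher_order_hardy m hm hv hv0
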